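/- arXiv:2308.10463 — 2 statements merged into one kernel-verified Lean document; each statement's English description precedes it below -/
import Mathlib

section
/- Let G be a graph, π = {W_1,…,W_m} a clique vertex-partition of G, and G^π the fully clique-whiskered graph. Then the set {y_1,…,y_m} of whisker vertices is an independent set of G^π, and every maximal independent set of G^π has cardinality m, i.e., G^π is well-covered with independence number α(G^π) = m. -/
/-- The fully clique-whiskered graph `G^π` (see stmt 4). -/
def cliqueWhisker {V : Type*} (G : SimpleGraph V) {m : ℕ} (W : V → Fin m) :
    SimpleGraph (V ⊕ Fin m) where
  Adj x y := match x, y with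
    | .inl u, .inl v => G.Adj u v
    | .inl u, .inr c => W u = c
    | .inr c, .inl u => W u = c
    | .inr _, .inr _ => False
  symm := ⟨by rintro (u|c) (v|d) h <;> simp_all <;> exact h.symm⟩
  loopless := ⟨by rintro (u|c) h <;> simp_all⟩

/-- A finite set of vertices is independent in `H`. -/
def IsIndepSet {W : Type*} (H : SimpleGraph W) (s : Finset W) : Prop :=
  ∀ u ∈ s, ∀ v ∈ s, ¬ H.Adj u v

/-- The independence number of `H` (over finite vertex types). -/
noncomputable def indepNum {W : Type*} (H : SimpleGraph W) : ℕ :=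
  sSup {r | ∃ s : Finset W, IsIndepSet H s ∧ s.card = r}

/-!
In `G^π` each block `W_i ∪ {y_i}` is a clique, and these `m` blocks partition the vertices, so an
independent set meets every block at most once and has at most `m` elements; `{y_1, …, y_m}`
attains this. A maximal independent set meets every block: if it missed `W_i ∪ {y_i}`, then `y_i`,
whose only neighbours lie in `W_i`, could be added.
-/

lemma IsIndepSet.insert {α : Type*} [DecidableEq α] {H : SimpleGraph α} {x : α} {s : Finset α}
    (hs : IsIndepSet H s) (hx : ∀ y ∈ s, ¬ H.Adj x y) : IsIndepSet H (insert x s) := by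
  intro u hu v hv
  rcases Finset.mem_insert.mp hu with rfl | hus <;> rcases Finset.mem_insert.mp hv with rfl | hvs
  · exact H.loopless.irrefl _
  · exact hx v hvs
  · exact fun h => hx u hus h.symm
  · exact hs u hus v hvs

lemma indepNum_eq_of_isIndepSet_card_eq {α : Type*} {H : SimpleGraph α} {n : ℕ}
    (hle : ∀ s, IsIndepSet H s → s.card ≤ n) {s₀ : Finset α} (hs₀ : IsIndepSet H s₀)
    (hcard : s₀.card = n) : indepNum H = n := by
  have hbdd : BddAbove {r | ∃ s : Finset α, IsIndepSet H s ∧ s.card = r} := by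
    refine ⟨n, ?_⟩
    rintro r ⟨s, hs, rfl⟩
    exact hle s hs
  refine le_antisymm (csSup_le ⟨n, s₀, hs₀, hcard⟩ ?_) (le_csSup hbdd ⟨s₀, hs₀, hcard⟩)
  rintro r ⟨s, hs, rfl⟩
  exact hle s hs

namespace cliqueWhisker

variable {V : Type*} {G : SimpleGraph V} {m : ℕ} {W : V → Fin m}

/-- The index `i` of the clique `W_i ∪ {y_i}` of `G^π` containing a vertex. -/
def block (W : V → Fin m) : V ⊕ Fin m → Fin m := Sum.elim W id

lemma not_adj_inr_of_block_ne {c : Fin m} {x : V ⊕ Fin m} (hx : block W x ≠ c) :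
    ¬ (cliqueWhisker G W).Adj (Sum.inr c) x := by
  rcases x with u | d
  · exact hx
  · exact id

lemma isIndepSet_image_inr [DecidableEq V] :
    IsIndepSet (cliqueWhisker G W) (Finset.univ.image Sum.inr) := by
  intro x hx y hy
  obtain ⟨c, -, rfl⟩ := Finset.mem_image.mp hx
  obtain ⟨d, -, rfl⟩ := Finset.mem_image.mp hy
  exact id

variable (hclique : ∀ u v, u ≠ v → W u = W v → G.Adj u v)
include hclique

lemma injOn_block {s : Finset (V ⊕ Fin m)} (hs : IsIndepSet (cliqueWhisker G W) s) :
    Set.InjOn (block W) s := by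
  rintro (u | c) hx (v | d) hy h
  · by_contra hne
    exact hs _ hx _ hy (hclique u v (fun huv => hne (congrArg Sum.inl huv)) h)
  · exact absurd h (hs _ hx _ hy)
  · exact absurd h.symm (hs _ hx _ hy)
  · exact congrArg Sum.inr h

lemma card_le_of_isIndepSet {s : Finset (V ⊕ Fin m)}
    (hs : IsIndepSet (cliqueWhisker G W) s) : s.card ≤ m := by
  simpa using Finset.card_le_card_of_injOn (block W) (fun _ _ => Finset.mem_coe.mpr
    (Finset.mem_univ _)) (injOn_block hclique hs)

lemma card_eq_of_maximal [DecidableEq V] {s : Finset (V ⊕ Fin m)}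
    (hs : IsIndepSet (cliqueWhisker G W) s)
    (hmax : ∀ t, IsIndepSet (cliqueWhisker G W) t → s ⊆ t → t = s) : s.card = m := by
  have hsurj : ∀ c : Fin m, ∃ x ∈ s, block W x = c := by
    intro c
    by_contra! hc
    have hins := hmax _ (hs.insert fun y hy => not_adj_inr_of_block_ne (hc y hy))
      (Finset.subset_insert _ _)
    exact hc _ (hins ▸ Finset.mem_insert_self _ _) rfl
  simpa using Finset.card_bij (fun x _ => block W x) (fun _ _ => Finset.mem_univ _)
    (fun x hx y hy h => injOn_block hclique hs hx hy h)
    (fun c _ => by simpa using hsurj c)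

end cliqueWhisker

open cliqueWhisker in
theorem cliqueWhisker_wellCovered_general {V : Type*} [DecidableEq V]
    (G : SimpleGraph V) (m : ℕ) (W : V → Fin m)
    (hclique : ∀ u v, u ≠ v → W u = W v → G.Adj u v) :
    IsIndepSet (cliqueWhisker G W) (Finset.univ.image Sum.inr) ∧
    (∀ s : Finset (V ⊕ Fin m), IsIndepSet (cliqueWhisker G W) s →
      (∀ t : Finset (V ⊕ Fin m), IsIndepSet (cliqueWhisker G W) t → s ⊆ t → t = s) →
      s.card = m) ∧
    indepNum (cliqueWhisker G W) = m := by
  have hcard : (Finset.univ.image (Sum.inr : Fin m → V ⊕ Fin m)).card = m := by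
    simp [Finset.card_image_of_injective _ Sum.inr_injective]
  exact ⟨isIndepSet_image_inr, fun _ hs hmax => card_eq_of_maximal hclique hs hmax,
    indepNum_eq_of_isIndepSet_card_eq (fun _ => card_le_of_isIndepSet hclique)
      isIndepSet_image_inr hcard⟩

/-- the set `{y_1,…,y_m}` of whisker vertices is independent in `G^π`,
every maximal independent set of `G^π` has cardinality `m` (`G^π` is well-covered),
and `α(G^π) = m`. -/
theorem cliqueWhisker_wellCovered {V : Type*} [Fintype V] [DecidableEq V]
    (G : SimpleGraph V) (m : ℕ) (W : V → Fin m)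
    (hclique : ∀ u v, u ≠ v → W u = W v → G.Adj u v)
    (hsurj : Function.Surjective W) :
    IsIndepSet (cliqueWhisker G W) (Finset.univ.image Sum.inr) ∧
    (∀ s : Finset (V ⊕ Fin m), IsIndepSet (cliqueWhisker G W) s →
      (∀ t : Finset (V ⊕ Fin m), IsIndepSet (cliqueWhisker G W) t → s ⊆ t → t = s) →
      s.card = m) ∧
    indepNum (cliqueWhisker G W) = m :=
  cliqueWhisker_wellCovered_general G m W hclique
end

section
/- For any graph G, reg(I(G)) ≤ ord-match(G) + 1, where reg is the Castelnuovo–Mumford regularity of the edge ideal and ord-match(G) is the ordered matching number. -/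
open MvPolynomial

variable {V : Type*} [Fintype V] [LinearOrder V] {K : Type*} [Field K]

/-- The Koszul differential on the Koszul complex `K_•(x_1,…,x_n)` of the sequence of
all variables (the minimal free resolution of the residue field `K = S/m`), written in
terms of the basis `e_T`, `T ⊆ {x_1,…,x_n}`: a chain is a function
`c : Finset V → S` (the coefficient of `e_T`), and
`(kd c) T = ∑_{t ∉ T} ± x_t · c (T ∪ {t})`. -/
noncomputable def koszulDiff (K : Type*) [Field K] (c : Finset V → MvPolynomial V K) :
    Finset V → MvPolynomial V K :=
  fun T => ∑ t ∈ Tᶜ,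
    (-1 : MvPolynomial V K) ^ ((T.filter (fun s => s < t)).card) *
      (X t * c (insert t T))

/-- `Tor_i^S(K, I)_{i+d} ≠ 0`, computed via the Koszul resolution of the residue field
`K = S/m`: there is a cycle of homological degree `i` and internal degree `i + d` in
`K_•(x) ⊗_S I` (a function `c : Finset V → I` supported on `i`-subsets, with
coefficients homogeneous of degree `d`, killed by the Koszul differential) which is
not a boundary. -/
def torNonzero (I : Ideal (MvPolynomial V K)) (i d : ℕ) : Prop :=
  ∃ c : Finset V → MvPolynomial V K,
    (∀ T, c T ∈ I) ∧ (∀ T, T.card ≠ i → c T = 0) ∧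
    (∀ T, (c T).IsHomogeneous d) ∧
    koszulDiff K c = 0 ∧
    ¬ ∃ g : Finset V → MvPolynomial V K,
      (∀ T, g T ∈ I) ∧ (∀ T, T.card ≠ i + 1 → g T = 0) ∧ koszulDiff K g = c

/-- The Castelnuovo–Mumford regularity of a homogeneous ideal `I` (as an `S`-module):
`reg(I) = max {d | Tor_i(K, I)_{i+d} ≠ 0 for some i}`. -/
noncomputable def regIdeal (I : Ideal (MvPolynomial V K)) : ℕ :=
  sSup {d | ∃ i, torNonzero I i d}

/-- The edge ideal `I(H)` of a graph. -/
noncomputable def edgeIdeal (K : Type*) [Field K] {W : Type*} (H : SimpleGraph W) :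
    Ideal (MvPolynomial W K) :=
  Ideal.span {f | ∃ u v, H.Adj u v ∧ f = X u * X v}


/-- Ordered matching. -/
def IsOrderedMatching {W : Type*} (G : SimpleGraph W) (r : ℕ)
    (a b : Fin r → W) : Prop :=
  1 ≤ r ∧
  (∀ i, G.Adj (a i) (b i)) ∧
  Function.Injective (Sum.elim a b) ∧
  (∀ i j, ¬ G.Adj (a i) (a j)) ∧
  (∀ i j : Fin r, G.Adj (a i) (b j) → i ≤ j)

/-- The ordered matching number (as a natural number; `0` if there is none). -/
noncomputable def ordMatchNum {W : Type*} (G : SimpleGraph W) : ℕ :=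
  sSup {r | ∃ a b : Fin r → W, IsOrderedMatching G r a b}

/-!
The Koszul complex of the variables is `ℕ^V`-graded, so a cycle `c` of `K_•(x) ⊗ I(G)` splits
into strands: for a multidegree `β`, the coefficients `T ↦ coeff (β - e_T) (c T)`, where
`e_T = sqfreeExp T` is the exponent of `x_T = ∏_{t ∈ T} x_t`, form a cycle of the simplicial
chain complex on subsets of `V`, supported on the faces `T` with `x_T ∣ x^β` and
`x^β / x_T ∈ I(G)`. It suffices to make each strand a boundary of a chain with the same support
property. If `β v ≥ 2`, the cone from `v` does it. If `β = e_W` is squarefree, the faces are the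
`T ⊆ W` such that `W \ T` contains an edge, and we induct on `W`, splitting off a vertex `v` into
link and deletion. The induction needs a second parameter `N`: also allowed are the `T` that miss
a vertex of `N`. Taking `v ∈ N` makes the deletion a full simplex; for `N = ∅` take `v` on an edge
`vu`, and the deletion is the complex on `W - v` with `N` the neighbours of `v`. An ordered
matching of size `d - 1` on `W - v` avoiding those neighbours extends by `(v, u)` to one of size
`d` on `W`, so the absence of ordered matchings of size `d` makes every strand of internal degree
`d + 1` a boundary, i.e. `Tor_i(K, I(G))_{i + d + 1} = 0`.
-/

open Finset

section KoszulSign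

variable (R : Type*) [CommRing R] {α : Type*} [LinearOrder α]

def koszulSign (T : Finset α) (t : α) : R :=
  (-1) ^ #{s ∈ T | s < t}

variable {R}

theorem koszulSign_mul_self (T : Finset α) (t : α) :
    koszulSign R T t * koszulSign R T t = 1 := by
  rw [koszulSign, ← mul_pow, neg_one_mul, neg_neg, one_pow]

theorem koszulSign_insert {v : α} {T : Finset α} (hv : v ∉ T) (t : α) :
    koszulSign R (insert v T) t = (if v < t then -1 else 1) * koszulSign R T t := by
  unfold koszulSign
  rw [filter_insert]
  split_ifs with hvt
  · rw [card_insert_of_notMem (fun h => hv (mem_of_mem_filter _ h)), pow_succ, mul_comm]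
  · rw [one_mul]

theorem koszulSign_insert_mul_koszulSign_insert {v t : α} {S : Finset α} (hv : v ∉ S)
    (ht : t ∉ S) (hvt : v ≠ t) :
    koszulSign R (insert v S) t * koszulSign R (insert t S) v =
      -(koszulSign R S t * koszulSign R S v) := by
  rw [koszulSign_insert hv, koszulSign_insert ht]
  rcases hvt.lt_or_gt with h | h
  · rw [if_pos h, if_neg h.asymm]; ring
  · rw [if_neg h.asymm, if_pos h]; ring

theorem koszulSign_mul_koszulSign_insert {v t : α} {S : Finset α} (hv : v ∉ S) (ht : t ∉ S)
    (hvt : v ≠ t) :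
    koszulSign R S t * koszulSign R (insert t S) v =
      -(koszulSign R S v * koszulSign R (insert v S) t) := by
  rw [koszulSign_insert hv, koszulSign_insert ht]
  rcases hvt.lt_or_gt with h | h
  · rw [if_pos h, if_neg h.asymm]; ring
  · rw [if_neg h.asymm, if_pos h]; ring

end KoszulSign

section Boundary

variable {R : Type*} [CommRing R]

def boundary : (Finset V → R) →ₗ[R] (Finset V → R) where
  toFun lam T := ∑ t ∈ Tᶜ, koszulSign R T t * lam (insert t T)
  map_add' f g := by ext T; simp [mul_add, sum_add_distrib]
  map_smul' r f := by ext T; simp [mul_left_comm, mul_sum]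

theorem boundary_apply (lam : Finset V → R) (T : Finset V) :
    boundary lam T = ∑ t ∈ Tᶜ, koszulSign R T t * lam (insert t T) := rfl

theorem boundary_boundary (lam : Finset V → R) : boundary (boundary lam) = 0 := by
  ext T
  simp only [boundary_apply, mul_sum, Pi.zero_apply]
  rw [sum_sigma']
  have mem_swap : ∀ p ∈ Tᶜ.sigma fun t => (insert t T)ᶜ,
      (⟨p.2, p.1⟩ : (_ : V) × V) ∈ Tᶜ.sigma fun t => (insert t T)ᶜ := by
    rintro ⟨t, s⟩ h
    simp only [mem_sigma, mem_compl, mem_insert, not_or] at h ⊢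
    exact ⟨h.2.2, Ne.symm h.2.1, h.1⟩
  refine sum_involution (fun p _ => ⟨p.2, p.1⟩) (fun ⟨t, s⟩ h => ?_) (fun ⟨t, s⟩ h _ => ?_)
    mem_swap (fun _ _ => rfl)
  · simp only [mem_sigma, mem_compl, mem_insert, not_or] at h
    rw [insert_comm, ← mul_assoc, ← mul_assoc, koszulSign_mul_koszulSign_insert h.2.2 h.1 h.2.1,
      neg_mul, neg_add_cancel]
  · simp only [mem_sigma, mem_compl, mem_insert, not_or] at h
    simpa [Sigma.ext_iff] using fun hst _ => h.2.1 hst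

end Boundary

section Cone

variable {R : Type*} [CommRing R] {α : Type*} [LinearOrder α]

def cone (a : α) (lam : Finset α → R) : Finset α → R := fun U =>
  if a ∈ U then koszulSign R (U.erase a) a * lam (U.erase a) else 0

def link (v : α) (lam : Finset α → R) : Finset α → R := fun S =>
  if v ∈ S then 0 else koszulSign R S v * lam (insert v S)

theorem cone_zero (a : α) : cone a (0 : Finset α → R) = 0 := by
  ext U; simp [cone]

theorem link_zero (v : α) : link v (0 : Finset α → R) = 0 := by
  ext U; simp [link]

theorem mem_and_ne_zero_of_cone_ne_zero {a : α} {lam : Finset α → R} {U : Finset α}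
    (h : cone a lam U ≠ 0) : a ∈ U ∧ lam (U.erase a) ≠ 0 := by
  unfold cone at h
  split_ifs at h with ha
  · exact ⟨ha, right_ne_zero_of_mul h⟩
  · exact absurd rfl h

theorem notMem_and_ne_zero_of_link_ne_zero {v : α} {lam : Finset α → R} {S : Finset α}
    (h : link v lam S ≠ 0) : v ∉ S ∧ lam (insert v S) ≠ 0 := by
  unfold link at h
  split_ifs at h with hv
  · exact absurd rfl h
  · exact ⟨hv, right_ne_zero_of_mul h⟩

theorem cone_link (v : α) (lam : Finset α → R) :
    cone v (link v lam) = fun T => if v ∈ T then lam T else 0 := by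
  ext T
  by_cases hv : v ∈ T
  · simp [cone, link, hv, ← mul_assoc, koszulSign_mul_self]
  · simp [cone, hv]

end Cone

section ConeBoundary

variable {R : Type*} [CommRing R]

theorem boundary_cone (a : V) (lam : Finset V → R) :
    boundary (cone a lam) = lam - cone a (boundary lam) := by
  ext T
  by_cases ha : a ∈ T
  · set S := T.erase a
    have haS : a ∉ S := notMem_erase a T
    have hST : insert a S = T := insert_erase ha
    rw [Pi.sub_apply, cone, if_pos ha, boundary_apply, boundary_apply, compl_erase,
      sum_insert (notMem_compl.mpr ha), hST, mul_add, ← mul_assoc, koszulSign_mul_self, one_mul,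
      sub_add_cancel_left, mul_sum, ← sum_neg_distrib]
    refine sum_congr rfl fun t ht => ?_
    have htT : t ∉ T := mem_compl.mp ht
    have hta : t ≠ a := fun h => htT (h ▸ ha)
    have hsign := koszulSign_insert_mul_koszulSign_insert (R := R) haS
      (fun h => htT (mem_of_mem_erase h)) hta.symm
    rw [hST] at hsign
    rw [cone, if_pos (mem_insert_of_mem ha), erase_insert_of_ne hta]
    linear_combination lam (insert t S) * hsign
  · rw [Pi.sub_apply, cone, if_neg ha, sub_zero, boundary_apply,
      sum_eq_single_of_mem a (mem_compl.mpr ha)]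
    · rw [cone, if_pos (mem_insert_self a T), erase_insert ha, ← mul_assoc,
        koszulSign_mul_self, one_mul]
    · intro t _ hta
      rw [cone, if_neg (by simp [Ne.symm hta, ha]), mul_zero]

theorem boundary_cone_of_boundary_eq_zero {a : V} {lam : Finset V → R}
    (h : boundary lam = 0) : boundary (cone a lam) = lam := by
  rw [boundary_cone, h, cone_zero, sub_zero]

theorem boundary_link (v : V) (lam : Finset V → R) :
    boundary (link v lam) = -link v (boundary lam) := by
  ext S
  by_cases hv : v ∈ S
  · simp [boundary_apply, link, hv]
  · rw [Pi.neg_apply, link, if_neg hv, boundary_apply, boundary_apply,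
      ← sum_erase_add _ _ (mem_compl.mpr hv), link, if_pos (mem_insert_self v S), mul_zero,
      add_zero, compl_insert, mul_sum, ← sum_neg_distrib]
    refine sum_congr rfl fun t ht => ?_
    have htv : t ≠ v := ne_of_mem_erase ht
    have hsign := koszulSign_mul_koszulSign_insert (R := R) hv
      (mem_compl.mp (mem_of_mem_erase ht)) htv.symm
    rw [link, if_neg (by simp [htv.symm, hv]), insert_comm]
    linear_combination lam (insert t (insert v S)) * hsign

end ConeBoundary

section OrderedMatching

variable {α : Type*} {G : SimpleGraph α}

def HasOrderedMatchingIn (G : SimpleGraph α) (S : Finset α) (r : ℕ) : Prop :=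
  ∃ a b : Fin r → α, IsOrderedMatching G r a b ∧ (∀ j, a j ∈ S) ∧ ∀ j, b j ∈ S

theorem HasOrderedMatchingIn.mono {S S' : Finset α} {r : ℕ} (h : HasOrderedMatchingIn G S r)
    (hSS' : S ⊆ S') : HasOrderedMatchingIn G S' r := by
  obtain ⟨a, b, hab, ha, hb⟩ := h
  exact ⟨a, b, hab, fun j => hSS' (ha j), fun j => hSS' (hb j)⟩

theorem hasOrderedMatchingIn_one {S : Finset α} {p q : α} (hpq : G.Adj p q) (hp : p ∈ S)
    (hq : q ∈ S) : HasOrderedMatchingIn G S 1 := by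
  refine ⟨fun _ => p, fun _ => q, ⟨le_rfl, fun _ => hpq, ?_, fun _ _ => G.irrefl,
    fun i j _ => (Subsingleton.elim i j).le⟩, fun _ => hp, fun _ => hq⟩
  exact (Function.injective_of_subsingleton _).sumElim (Function.injective_of_subsingleton _)
    fun _ _ => hpq.ne

theorem IsOrderedMatching.snoc {r : ℕ} {a b : Fin r → α} {v u : α}
    (h : IsOrderedMatching G r a b) (hvu : G.Adj v u) (hva : ∀ j, ¬ G.Adj v (a j))
    (hvb : ∀ j, ¬ G.Adj v (b j)) (hua : ∀ j, u ≠ a j) (hub : ∀ j, u ≠ b j) :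
    IsOrderedMatching G (r + 1) (Fin.snoc a v) (Fin.snoc b u) := by
  obtain ⟨-, hadj, hinj, hind, hord⟩ := h
  have hva' : ∀ j, v ≠ a j := fun j hj => hvb j (hj ▸ hadj j)
  have hvb' : ∀ j, v ≠ b j := fun j hj => hva j (hj ▸ (hadj j).symm)
  refine ⟨by omega, ?_, ?_, ?_, ?_⟩
  · simp [Fin.forall_fin_succ', hadj, hvu]
  · refine Function.Injective.sumElim ?_ ?_ ?_
    · exact Fin.snoc_injective_of_injective (hinj.comp Sum.inl_injective)
        (by rintro ⟨j, hj⟩; exact hva' j hj.symm)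
    · exact Fin.snoc_injective_of_injective (hinj.comp Sum.inr_injective)
        (by rintro ⟨j, hj⟩; exact hub j hj.symm)
    · have hab : ∀ j k, a j ≠ b k := fun j k => hinj.ne Sum.inl_ne_inr
      simp [Fin.forall_fin_succ', hab, hvb', hvu.ne, fun j => (hua j).symm]
  · simp [Fin.forall_fin_succ', hind, hva, fun j => (G.adj_comm (a j) v).not.mpr (hva j)]
  · simpa [Fin.forall_fin_succ', hvb, Fin.le_last] using hord

theorem HasOrderedMatchingIn.insert_insert [DecidableEq α] {S : Finset α} {r : ℕ} {v u : α}
    (h : HasOrderedMatchingIn G S r) (hvu : G.Adj v u) (hvS : ∀ s ∈ S, ¬ G.Adj v s)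
    (huS : u ∉ S) : HasOrderedMatchingIn G (insert v (insert u S)) (r + 1) := by
  obtain ⟨a, b, hab, ha, hb⟩ := h
  refine ⟨_, _, hab.snoc hvu (fun j => hvS _ (ha j)) (fun j => hvS _ (hb j))
    (fun j hj => huS (hj ▸ ha j)) (fun j hj => huS (hj ▸ hb j)), ?_, ?_⟩ <;>
  simp [Fin.forall_fin_succ', ha, hb]

theorem IsOrderedMatching.le_ordMatchNum [Finite α] {r : ℕ} {a b : Fin r → α}
    (h : IsOrderedMatching G r a b) : r ≤ ordMatchNum G := by
  have hbdd : BddAbove {r | ∃ a b : Fin r → α, IsOrderedMatching G r a b} := by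
    refine ⟨Nat.card α, fun r ⟨a, b, hab⟩ => ?_⟩
    have := Nat.card_le_card_of_injective _ hab.2.2.1
    simp only [Nat.card_eq_fintype_card, Fintype.card_sum, Fintype.card_fin] at this
    omega
  exact le_csSup hbdd ⟨a, b, h⟩

end OrderedMatching

section EdgeFaces

variable {α : Type*} (G : SimpleGraph α)

def ContainsEdge (S : Finset α) : Prop := ∃ p ∈ S, ∃ q ∈ S, G.Adj p q

variable {G}

theorem ContainsEdge.mono {S S' : Finset α} (h : ContainsEdge G S) (hSS' : S ⊆ S') :
    ContainsEdge G S' := by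
  obtain ⟨p, hp, q, hq, hpq⟩ := h
  exact ⟨p, hSS' hp, q, hSS' hq, hpq⟩

variable [DecidableEq α] (G)

def edgeFaces (W N : Finset α) (d : ℕ) : Set (Finset α) :=
  {T | T ⊆ W ∧ #(W \ T) = d ∧ (ContainsEdge G (W \ T) ∨ ¬ N ⊆ T)}

variable {G} {W N S T : Finset α} {v : α} {d : ℕ}

theorem mem_edgeFaces :
    T ∈ edgeFaces G W N d ↔ T ⊆ W ∧ #(W \ T) = d ∧ (ContainsEdge G (W \ T) ∨ ¬ N ⊆ T) :=
  Iff.rfl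

theorem insert_mem_edgeFaces_iff (hv : v ∈ W) (hvS : v ∉ S) :
    insert v S ∈ edgeFaces G W N d ↔ S ∈ edgeFaces G (W.erase v) (N.erase v) d := by
  have hsub : insert v S ⊆ W ↔ S ⊆ W.erase v := by grind
  rw [mem_edgeFaces, mem_edgeFaces, hsub, sdiff_insert, erase_sdiff_comm, subset_insert_iff]

theorem mem_edgeFaces_of_mem_edgeFaces_erase (hv : v ∈ W)
    (hT : T ∈ edgeFaces G (W.erase v) (N.erase v) d) : T ∈ edgeFaces G W N (d + 1) ∧ v ∉ T := by
  obtain ⟨hTW, hcard, hedge⟩ := hT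
  have hvT : v ∉ T := fun h => by simpa using hTW h
  have hsdiff : W \ T = insert v (W.erase v \ T) := by grind
  refine ⟨⟨hTW.trans (erase_subset v W), ?_, ?_⟩, hvT⟩
  · rw [hsdiff, card_insert_of_notMem (by simp), hcard]
  · refine hedge.imp (fun h => h.mono (hsdiff ▸ subset_insert _ _)) fun hN hNT => hN ?_
    exact (erase_subset v N).trans hNT

variable [DecidableRel G.Adj]

theorem mem_edgeFaces_erase_neighbors (hv : v ∈ W) (hvT : v ∉ T)
    (hT : T ∈ edgeFaces G W ∅ (d + 1)) :
    T ∈ edgeFaces G (W.erase v) ((W.erase v).filter (G.Adj v)) d := by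
  obtain ⟨hTW, hcard, hedge⟩ := hT
  have hsdiff : W \ T = insert v (W.erase v \ T) := by grind
  refine ⟨fun x hx => mem_erase.mpr ⟨fun h => hvT (h ▸ hx), hTW hx⟩, ?_, ?_⟩
  · rw [hsdiff, card_insert_of_notMem (by simp)] at hcard
    omega
  obtain ⟨p, hp, q, hq, hpq⟩ := hedge.resolve_right (by simp)
  have neighbor {x} (hx : x ∈ W \ T) (hvx : G.Adj v x) : ¬ (W.erase v).filter (G.Adj v) ⊆ T :=
    fun hN => (mem_sdiff.mp hx).2 (hN (by simp [hvx, hvx.ne', (mem_sdiff.mp hx).1]))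
  by_cases hpv : p = v
  · exact .inr (neighbor hq (hpv ▸ hpq))
  by_cases hqv : q = v
  · exact .inr (neighbor hp (hqv ▸ hpq.symm))
  exact .inl ⟨p, by simp_all, q, by simp_all, hpq⟩

theorem mem_edgeFaces_of_mem_edgeFaces_erase_neighbors (hv : v ∈ W)
    (hT : T ∈ edgeFaces G (W.erase v) ((W.erase v).filter (G.Adj v)) d) :
    T ∈ edgeFaces G W ∅ (d + 1) := by
  obtain ⟨hTW, hcard, hedge⟩ := hT
  have hvT : v ∉ T := fun h => by simpa using hTW h
  have hsdiff : W \ T = insert v (W.erase v \ T) := by grind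
  refine ⟨hTW.trans (erase_subset v W), ?_, .inl ?_⟩
  · rw [hsdiff, card_insert_of_notMem (by simp), hcard]
  rcases hedge with hedge | hN
  · exact hedge.mono (hsdiff ▸ subset_insert _ _)
  · obtain ⟨p, hp, hpT⟩ := not_subset.mp hN
    rw [mem_filter, mem_erase] at hp
    exact ⟨v, by simp [hv, hvT], p, by simp [hp.1.2, hpT], hp.2⟩

end EdgeFaces

section CyclesBound

variable (R : Type*) [CommRing R] (G : SimpleGraph V)

def CyclesBound (W N : Finset V) (d : ℕ) : Prop :=
  ∀ lam : Finset V → R, Function.support lam ⊆ edgeFaces G W N (d + 1) → boundary lam = 0 →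
    ∃ mu, Function.support mu ⊆ edgeFaces G W N d ∧ boundary mu = lam

variable {R G} {W N : Finset V} {v : V} {d : ℕ}

theorem CyclesBound.of_link (hv : v ∈ W) (hlink : CyclesBound R G (W.erase v) (N.erase v) d)
    (hdel : ∀ lam : Finset V → R,
      Function.support lam ⊆ edgeFaces G W N (d + 1) ∩ {T | v ∉ T} → boundary lam = 0 →
        ∃ mu, Function.support mu ⊆ edgeFaces G W N d ∧ boundary mu = lam) :
    CyclesBound R G W N d := by
  intro lam hlam hcyc
  have hlink_supp :
      Function.support (link v lam) ⊆ edgeFaces G (W.erase v) (N.erase v) (d + 1) := by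
    intro S hS
    obtain ⟨hvS, hS⟩ := notMem_and_ne_zero_of_link_ne_zero hS
    exact (insert_mem_edgeFaces_iff hv hvS).mp (hlam hS)
  obtain ⟨gam, hgam, hgamb⟩ :=
    hlink (link v lam) hlink_supp (by rw [boundary_link, hcyc, link_zero, neg_zero])
  have hrest : lam + boundary (cone v gam) = (fun T => if v ∈ T then 0 else lam T) + gam := by
    ext T
    rw [boundary_cone, hgamb, cone_link]
    by_cases hvT : v ∈ T <;> simp [hvT]
  have hrest_supp : Function.support (lam + boundary (cone v gam)) ⊆
      edgeFaces G W N (d + 1) ∩ {T | v ∉ T} := by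
    rw [hrest]
    refine (Function.support_add _ _).trans (Set.union_subset ?_ ?_)
    · intro T hT
      by_cases hvT : v ∈ T
      · simp [hvT] at hT
      · simp only [Function.mem_support, hvT, if_false] at hT
        exact ⟨hlam hT, hvT⟩
    · exact fun T hT => mem_edgeFaces_of_mem_edgeFaces_erase hv (hgam hT)
  obtain ⟨mu, hmu, hmub⟩ :=
    hdel _ hrest_supp (by rw [map_add, boundary_boundary, hcyc, add_zero])
  refine ⟨-cone v gam + mu, ?_, by rw [map_add, map_neg, hmub]; abel⟩
  refine (Function.support_add _ _).trans (Set.union_subset ?_ hmu)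
  rw [Function.support_neg]
  intro U hU
  obtain ⟨hvU, hU⟩ := mem_and_ne_zero_of_cone_ne_zero hU
  rw [← insert_erase hvU]
  exact (insert_mem_edgeFaces_iff hv (notMem_erase v U)).mpr (hgam hU)

theorem CyclesBound.of_mem (hvN : v ∈ N) (hNW : N ⊆ W) (hd : 1 ≤ d)
    (hlink : CyclesBound R G (W.erase v) (N.erase v) d) : CyclesBound R G W N d := by
  refine hlink.of_link (hNW hvN) fun lam hlam hcyc => ?_
  by_cases hlam0 : lam = 0
  · exact ⟨0, by simp, by simp [hlam0]⟩
  obtain ⟨T₀, hT₀⟩ := Function.support_nonempty_iff.mpr hlam0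
  obtain ⟨a, haW, hav⟩ := exists_mem_ne (s := W \ T₀) (by rw [(hlam hT₀).1.2.1]; omega) v
  refine ⟨cone a lam, fun U hU => ?_, boundary_cone_of_boundary_eq_zero hcyc⟩
  obtain ⟨haU, hU⟩ := mem_and_ne_zero_of_cone_ne_zero hU
  obtain ⟨⟨hTW, hTcard, -⟩, hvT⟩ := hlam hU
  have hsdiff : W \ U = (W \ U.erase a).erase a := by grind
  refine ⟨?_, ?_, .inr fun hNU => hvT (mem_erase.mpr ⟨hav.symm, hNU hvN⟩)⟩
  · grind
  · rw [hsdiff, card_erase_of_mem (by grind), hTcard, Nat.add_sub_cancel]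

theorem CyclesBound.of_adj [DecidableRel G.Adj] (hv : v ∈ W)
    (hlink : CyclesBound R G (W.erase v) ∅ (d + 1))
    (hdel : CyclesBound R G (W.erase v) ((W.erase v).filter (G.Adj v)) d) :
    CyclesBound R G W ∅ (d + 1) := by
  refine CyclesBound.of_link hv (by rwa [erase_empty]) fun lam hlam hcyc => ?_
  obtain ⟨mu, hmu, hmub⟩ :=
    hdel lam (fun T hT => mem_edgeFaces_erase_neighbors hv (hlam hT).2 (hlam hT).1) hcyc
  exact ⟨mu, fun U hU => mem_edgeFaces_of_mem_edgeFaces_erase_neighbors hv (hmu hU), hmub⟩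

theorem cyclesBound_of_not_hasOrderedMatchingIn (hNW : N ⊆ W) (hd : 1 ≤ d)
    (hno : ¬ HasOrderedMatchingIn G (W \ N) d) : CyclesBound R G W N d := by
  classical
  induction W using Finset.strongInduction generalizing N d with
  | H W ih =>
  rcases N.eq_empty_or_nonempty with rfl | ⟨v, hvN⟩
  · rw [sdiff_empty] at hno
    by_cases hedge : ContainsEdge G W
    · obtain ⟨v, hv, u, hu, hvu⟩ := hedge
      obtain ⟨e, rfl⟩ : ∃ e, d = e + 1 := ⟨d - 1, by omega⟩
      have he : 1 ≤ e := by
        by_contra! h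
        obtain rfl : e = 0 := by omega
        exact hno (hasOrderedMatchingIn_one hvu hv hu)
      refine CyclesBound.of_adj hv (ih _ (erase_ssubset hv) (empty_subset _) hd ?_)
        (ih _ (erase_ssubset hv) (filter_subset _ _) he ?_)
      · rw [sdiff_empty]
        exact fun h => hno (h.mono (erase_subset v W))
      · refine fun h => hno ((h.insert_insert hvu ?_ ?_).mono ?_)
        · exact fun s hs hvs => (mem_sdiff.mp hs).2 (mem_filter.mpr ⟨(mem_sdiff.mp hs).1, hvs⟩)
        · simp [hvu]
        · grind
    · intro lam hlam _
      have hlam0 : lam = 0 := by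
        refine Function.support_eq_empty_iff.mp (Set.eq_empty_of_forall_notMem fun T hT => ?_)
        obtain ⟨-, -, hT⟩ := hlam hT
        exact hT.elim (fun h => hedge (h.mono sdiff_subset)) fun h => h (empty_subset T)
      exact ⟨0, by simp, by simp [hlam0]⟩
  · have hv := hNW hvN
    refine CyclesBound.of_mem hvN hNW hd
      (ih _ (erase_ssubset hv) (erase_subset_erase v hNW) hd ?_)
    rwa [show W.erase v \ N.erase v = W \ N by grind]

end CyclesBound

section SqfreeExp

variable {α : Type*}

noncomputable def sqfreeExp (T : Finset α) : α →₀ ℕ := ∑ t ∈ T, Finsupp.single t 1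

theorem degree_sqfreeExp (T : Finset α) : (sqfreeExp T).degree = #T := by
  simp [sqfreeExp]

variable [DecidableEq α] {T W : Finset α} {t : α}

theorem sqfreeExp_apply (T : Finset α) (x : α) : sqfreeExp T x = if x ∈ T then 1 else 0 := by
  simp [sqfreeExp, Finsupp.finsetSum_apply, Finsupp.single_apply]

theorem sqfreeExp_insert (ht : t ∉ T) :
    sqfreeExp (insert t T) = sqfreeExp T + Finsupp.single t 1 := by
  rw [sqfreeExp, sum_insert ht, add_comm, sqfreeExp]

theorem support_sqfreeExp (T : Finset α) : (sqfreeExp T).support = T := by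
  ext x; simp [sqfreeExp_apply]

theorem sqfreeExp_sub_sqfreeExp (W T : Finset α) :
    sqfreeExp W - sqfreeExp T = sqfreeExp (W \ T) := by
  ext x
  simp only [Finsupp.tsub_apply, sqfreeExp_apply, mem_sdiff]
  split_ifs <;> simp_all

theorem sqfreeExp_le_sqfreeExp : sqfreeExp T ≤ sqfreeExp W ↔ T ⊆ W := by
  refine ⟨fun h x hx => ?_, fun h x => ?_⟩
  · have := h x
    simp only [sqfreeExp_apply, hx, if_true] at this
    split_ifs at this with hxW
    · exact hxW
    · omega
  · by_cases hx : x ∈ T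
    · simp [sqfreeExp_apply, hx, h hx]
    · simp [sqfreeExp_apply, hx]

theorem eq_sqfreeExp_support {β : α →₀ ℕ} (hβ : ∀ x, β x ≤ 1) : β = sqfreeExp β.support := by
  ext x
  have := hβ x
  by_cases hx : β x = 0 <;> simp [sqfreeExp_apply, hx]
  omega

end SqfreeExp

section StrandFaces

variable {α : Type*} (G : SimpleGraph α)

def strandFaces (β : α →₀ ℕ) (D : ℕ) : Set (Finset α) :=
  {T | sqfreeExp T ≤ β ∧ (β - sqfreeExp T).degree = D ∧ ContainsEdge G (β - sqfreeExp T).support}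

variable {G}

theorem mem_strandFaces {β : α →₀ ℕ} {D : ℕ} {T : Finset α} :
    T ∈ strandFaces G β D ↔ sqfreeExp T ≤ β ∧ (β - sqfreeExp T).degree = D ∧
      ContainsEdge G (β - sqfreeExp T).support :=
  Iff.rfl

theorem degree_eq_of_mem_strandFaces {β : α →₀ ℕ} {D : ℕ} {T : Finset α}
    (hT : T ∈ strandFaces G β D) : β.degree = #T + D := by
  rw [← hT.2.1, ← degree_sqfreeExp, ← map_add, add_tsub_cancel_of_le hT.1]

theorem strandFaces_sqfreeExp [DecidableEq α] (W : Finset α) (D : ℕ) :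
    strandFaces G (sqfreeExp W) D = edgeFaces G W ∅ D := by
  ext T
  simp only [mem_strandFaces, mem_edgeFaces, sqfreeExp_le_sqfreeExp,
    sqfreeExp_sub_sqfreeExp, degree_sqfreeExp, support_sqfreeExp, empty_subset, not_true, or_false]

theorem support_cone_subset_strandFaces {R : Type*} [CommRing R] [LinearOrder α]
    {β : α →₀ ℕ} {v : α} (hv : 2 ≤ β v) {D : ℕ} {lam : Finset α → R}
    (hlam : Function.support lam ⊆ strandFaces G β (D + 1)) :
    Function.support (cone v lam) ⊆ strandFaces G β D := by
  intro U hU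
  obtain ⟨hvU, hS⟩ := mem_and_ne_zero_of_cone_ne_zero hU
  obtain ⟨hSβ, hSdeg, hSedge⟩ := hlam hS
  have hU : sqfreeExp U = sqfreeExp (U.erase v) + Finsupp.single v 1 := by
    rw [← sqfreeExp_insert (notMem_erase v U), insert_erase hvU]
  have hSv : sqfreeExp (U.erase v) v = 0 := by simp [sqfreeExp_apply]
  have hγ : β - sqfreeExp (U.erase v) = (β - sqfreeExp U) + Finsupp.single v 1 := by
    ext x
    rw [hU]
    by_cases hx : x = v
    · subst hx
      simp only [Finsupp.coe_add, Finsupp.coe_tsub, Pi.add_apply, Pi.sub_apply, hSv,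
        Finsupp.single_eq_same]
      omega
    · simp [Ne.symm hx]
  refine ⟨fun x => ?_, ?_, hSedge.mono fun x hx => ?_⟩
  · rw [hU]
    by_cases hx : x = v
    · subst hx
      simp only [Finsupp.coe_add, Pi.add_apply, hSv, Finsupp.single_eq_same]
      omega
    · simpa [Ne.symm hx] using hSβ x
  · rw [hγ, map_add, Finsupp.degree_single] at hSdeg
    omega
  · rw [hγ, Finsupp.mem_support_iff] at hx
    rw [Finsupp.mem_support_iff]
    by_cases hxv : x = v
    · subst hxv
      simp only [hU, Finsupp.coe_tsub, Finsupp.coe_add, Pi.sub_apply, Pi.add_apply, hSv,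
        Finsupp.single_eq_same]
      omega
    · simpa [Finsupp.single_apply, Ne.symm hxv] using hx

end StrandFaces

theorem exists_boundary_strand {R : Type*} [CommRing R] {G : SimpleGraph V} {d : ℕ}
    (hd : 1 ≤ d) (hno : ¬ HasOrderedMatchingIn G univ d) {β : V →₀ ℕ} {lam : Finset V → R}
    (hlam : Function.support lam ⊆ strandFaces G β (d + 1)) (hcyc : boundary lam = 0) :
    ∃ mu, Function.support mu ⊆ strandFaces G β d ∧ boundary mu = lam := by
  by_cases hsq : ∃ v, 2 ≤ β v
  · obtain ⟨v, hv⟩ := hsq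
    exact ⟨cone v lam, support_cone_subset_strandFaces hv hlam,
      boundary_cone_of_boundary_eq_zero hcyc⟩
  · simp only [not_exists, not_le] at hsq
    rw [eq_sqfreeExp_support fun x => Nat.le_of_lt_succ (hsq x), strandFaces_sqfreeExp] at hlam ⊢
    exact cyclesBound_of_not_hasOrderedMatchingIn (empty_subset _) hd
      (fun h => hno (h.mono (subset_univ _))) lam hlam hcyc

section EdgeIdeal

variable {α : Type*} {G : SimpleGraph α}

theorem mem_edgeIdeal_iff {f : MvPolynomial α K} :
    f ∈ edgeIdeal K G ↔ ∀ γ ∈ f.support, ContainsEdge G γ.support := by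
  classical
  have hspan : edgeIdeal K G = Ideal.span ((fun s => monomial s (1 : K)) ''
      {s | ∃ p q, G.Adj p q ∧ s = Finsupp.single p 1 + Finsupp.single q 1}) := by
    rw [edgeIdeal]
    congr 1
    ext f
    simp [X, monomial_mul, eq_comm]
  rw [hspan, mem_ideal_span_monomial_image]
  refine forall₂_congr fun γ _ => ⟨?_, ?_⟩
  · rintro ⟨_, ⟨p, q, hpq, rfl⟩, hle⟩
    have hp := hle p
    have hq := hle q
    simp only [Finsupp.coe_add, Pi.add_apply, Finsupp.single_eq_same] at hp hq
    exact ⟨p, Finsupp.mem_support_iff.mpr (by omega), q,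
      Finsupp.mem_support_iff.mpr (by omega), hpq⟩
  · rintro ⟨p, hp, q, hq, hpq⟩
    refine ⟨_, ⟨p, q, hpq, rfl⟩, fun x => ?_⟩
    rw [Finsupp.mem_support_iff] at hp hq
    simp only [Finsupp.coe_add, Pi.add_apply, Finsupp.single_apply]
    split_ifs <;> subst_vars <;> first | omega | exact absurd rfl hpq.ne

theorem monomial_mem_edgeIdeal {γ : α →₀ ℕ} (h : ContainsEdge G γ.support) (k : K) :
    monomial γ k ∈ edgeIdeal K G := by
  classical
  refine mem_edgeIdeal_iff.mpr fun γ' hγ' => ?_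
  rwa [Finset.mem_singleton.mp (support_monomial_subset hγ')]

end EdgeIdeal

section Strand

variable {α : Type*}

noncomputable def strand (c : Finset α → MvPolynomial α K) (β : α →₀ ℕ) : Finset α → K :=
  fun T => if sqfreeExp T ≤ β then coeff (β - sqfreeExp T) (c T) else 0

noncomputable def ofStrands (B : Finset (α →₀ ℕ)) (mu : (α →₀ ℕ) → Finset α → K) :
    Finset α → MvPolynomial α K :=
  fun T => ∑ β ∈ B, monomial (β - sqfreeExp T) (mu β T)

theorem eq_of_forall_strand_eq {c c' : Finset α → MvPolynomial α K}
    (h : ∀ β, strand c β = strand c' β) : c = c' := by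
  ext T γ
  simpa [strand] using congr_fun (h (γ + sqfreeExp T)) T

theorem strand_ofStrands [DecidableEq α] {B : Finset (α →₀ ℕ)} {mu : (α →₀ ℕ) → Finset α → K}
    (hmu : ∀ β U, mu β U ≠ 0 → sqfreeExp U ≤ β) (β : α →₀ ℕ) :
    strand (ofStrands B mu) β = if β ∈ B then mu β else 0 := by
  ext T
  by_cases hT : sqfreeExp T ≤ β
  · have hterm : ∀ β' ∈ B, coeff (β - sqfreeExp T) (monomial (β' - sqfreeExp T) (mu β' T)) =
        if β' = β then mu β' T else 0 := by
      intro β' _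
      by_cases h : mu β' T = 0
      · simp [h]
      · simp only [coeff_monomial, tsub_left_inj (hmu β' T h) hT]
    simp only [strand, ofStrands, if_pos hT, coeff_sum, sum_congr rfl hterm, sum_ite_eq']
    split_ifs <;> rfl
  · have : mu β T = 0 := by_contra fun h => hT (hmu β T h)
    by_cases hβ : β ∈ B <;> simp [strand, hT, hβ, this]

end Strand

theorem strand_koszulDiff (c : Finset V → MvPolynomial V K) (β : V →₀ ℕ) :
    strand (koszulDiff K c) β = boundary (strand c β) := by
  ext T
  rw [boundary_apply]
  by_cases hT : sqfreeExp T ≤ β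
  · simp only [strand, if_pos hT, koszulDiff, coeff_sum]
    refine sum_congr rfl fun t ht => ?_
    have htT : t ∉ T := mem_compl.mp ht
    have hsign : (-1 : MvPolynomial V K) ^ #{s ∈ T | s < t} = C (koszulSign K T t) := by
      simp [koszulSign]
    have hiff : t ∈ (β - sqfreeExp T).support ↔ sqfreeExp T + Finsupp.single t 1 ≤ β := by
      rw [add_comm, ← le_tsub_iff_right hT, Finsupp.single_le_iff, Finsupp.mem_support_iff,
        Nat.one_le_iff_ne_zero]
    simp only [hsign, coeff_C_mul, coeff_X_mul', sqfreeExp_insert htT, tsub_add_eq_tsub_tsub,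
      hiff]
  · have hins : ∀ t, ¬ sqfreeExp (insert t T) ≤ β := fun t h =>
      hT ((sqfreeExp_le_sqfreeExp.mpr (subset_insert t T)).trans h)
    simp [strand, hT, hins]

theorem support_strand_subset {α : Type*} {G : SimpleGraph α} {c : Finset α → MvPolynomial α K}
    {D : ℕ} (hcI : ∀ T, c T ∈ edgeIdeal K G) (hhom : ∀ T, (c T).IsHomogeneous D)
    (β : α →₀ ℕ) : Function.support (strand c β) ⊆ strandFaces G β D := by
  intro T hT
  simp only [Function.mem_support, strand] at hT
  split_ifs at hT with hle
  · refine ⟨hle, ?_, mem_edgeIdeal_iff.mp (hcI T) _ (mem_support_iff.mpr hT)⟩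
    rw [Finsupp.degree_eq_weight_one]
    exact hhom T hT
  · exact absurd rfl hT

theorem exists_koszulDiff_eq_of_strands {G : SimpleGraph V} {c : Finset V → MvPolynomial V K}
    {i d : ℕ} (hci : ∀ T, #T ≠ i → c T = 0)
    (hsupp : ∀ β, Function.support (strand c β) ⊆ strandFaces G β (d + 1))
    (hbound : ∀ β, ∃ mu, Function.support mu ⊆ strandFaces G β d ∧ boundary mu = strand c β) :
    ∃ g : Finset V → MvPolynomial V K,
      (∀ T, g T ∈ edgeIdeal K G) ∧ (∀ T, #T ≠ i + 1 → g T = 0) ∧ koszulDiff K g = c := by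
  classical
  choose mu hmu hmub using hbound
  set B := (Finsupp.finite_of_degree_eq (σ := V) (i + (d + 1))).toFinset
  have hB : ∀ β, β ∈ B ↔ β.degree = i + (d + 1) := fun β => Set.Finite.mem_toFinset _
  have hstrand : ∀ β ∉ B, strand c β = 0 := by
    intro β hβ
    ext T
    by_contra hT
    have hcard : #T = i := by
      by_contra h
      exact hT (by simp [strand, hci T h])
    exact hβ ((hB β).mpr (by rw [degree_eq_of_mem_strandFaces (hsupp β hT), hcard]))
  refine ⟨ofStrands B mu, fun T => Ideal.sum_mem _ fun β _ => ?_, fun T hT => ?_, ?_⟩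
  · by_cases h : mu β T = 0
    · simp [h]
    · exact monomial_mem_edgeIdeal (hmu β h).2.2 _
  · refine sum_eq_zero fun β hβ => ?_
    have : mu β T = 0 := by
      by_contra h
      have := degree_eq_of_mem_strandFaces (hmu β h)
      have := (hB β).mp hβ
      omega
    simp [this]
  · refine eq_of_forall_strand_eq fun β => ?_
    rw [strand_koszulDiff, strand_ofStrands (fun β _ h => (hmu β h).1)]
    split_ifs with hβ
    · exact hmub β
    · rw [map_zero, hstrand β hβ]

theorem le_ordMatchNum_add_one_of_torNonzero {G : SimpleGraph V} {i D : ℕ}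
    (h : torNonzero (edgeIdeal K G) i D) : D ≤ ordMatchNum G + 1 := by
  by_contra! hD
  obtain ⟨d, rfl⟩ : ∃ d, D = d + 1 := ⟨D - 1, by omega⟩
  have hno : ¬ HasOrderedMatchingIn G univ d := fun ⟨a, b, hab, _⟩ => by
    have := hab.le_ordMatchNum
    omega
  obtain ⟨c, hcI, hci, hhom, hcyc, hnb⟩ := h
  have hsupp := support_strand_subset hcI hhom
  refine hnb (exists_koszulDiff_eq_of_strands hci hsupp fun β => ?_)
  refine exists_boundary_strand (by omega) hno (hsupp β) ?_
  rw [← strand_koszulDiff, hcyc]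
  ext
  simp [strand]

/-- for any graph `G`, `reg(I(G)) ≤ ord-match(G) + 1`. -/
theorem reg_edgeIdeal_le_ordMatch {n : ℕ} (K : Type*) [Field K]
    (G : SimpleGraph (Fin n)) :
    regIdeal (edgeIdeal K G) ≤ ordMatchNum G + 1 :=
  csSup_le' fun _ ⟨_, h⟩ => le_ordMatchNum_add_one_of_torNonzero h
end
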